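/- arXiv:2510.02795 — 3 statements merged into one kernel-verified Lean document; each statement's English description precedes it below -/
import Mathlib

section
/- Let C = (L_1, L_2, ...) be a countable collection of languages, let m*(L_1), m*(L_2), ... be the non-uniform complexities computed by Procedure 1, and let f : ℕ → ℕ be any non-decreasing function with f(t) → ∞ as t → ∞. Then there exists a generating algorithm G that non-uniformly generates from C with generation times t_G(L_i) ≤ max(g(i), m*(L_i) + 1) for every i, where g(i) is the smallest number j for which f(j) ≥ i. -/
/-!
At time `t` the generator looks at the ordering `C'_{f t}`, takes the longest prefix in which
the languages containing the input `S_t` have an infinite intersection, and outputs a new string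
of that intersection.

Procedure 1 keeps the invariant that whenever `C'_n = pre ++ a :: post`, every finite
intersection of `L a` with languages of `pre` has at most `m*(L a)` elements: a language
inserted in front of `a` is bounded by the witness `C(·)`, and one moved past `a` had
`m_chk ≤ m*(L a)`. For the true language `L_i`, once `t ≥ g(i)` it occurs in `C'_{f t}`, and once
`|S_t| > m*(L_i)` the languages up to `L_i` that contain `S_t` have an infinite intersection,
since a finite one would contain `S_t`. So the chosen prefix reaches `L_i`, and the output lies
in `L_i`.
-/

/-- A valid subcollection for the check in Procedure 1: a finite set `s` of language
indices drawn from the prefix `pre` (or equal to `last`), which contains `last`, and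
whose intersection `⋂ k ∈ s, L k` is finite. -/
def ValidSub (L : ℕ → Set ℕ) (pre : List ℕ) (last : ℕ) (s : Finset ℕ) : Prop :=
  last ∈ s ∧ (∀ k ∈ s, k = last ∨ k ∈ pre) ∧ (⋂ k ∈ s, L k).Finite

/-- `m` is the value `m_chk` computed in the while loop of Procedure 1 for the prefix
`pre` followed by the language `last`: the largest size of a finite intersection of a
subcollection containing `last` (and `0` if no such subcollection exists). -/
def IsMchk (L : ℕ → Set ℕ) (pre : List ℕ) (last : ℕ) (m : ℕ) : Prop :=
  ((¬ ∃ s, ValidSub L pre last s) ∧ m = 0) ∨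
    ((∃ s, ValidSub L pre last s ∧ (⋂ k ∈ s, L k).ncard = m) ∧
      ∀ s, ValidSub L pre last s → (⋂ k ∈ s, L k).ncard ≤ m)

/-- `s` is a witness subcollection `C_chk` realizing `m = m_chk` (with `s = ∅`, `m = 0`
if no valid subcollection exists). -/
def WitnessAt (L : ℕ → Set ℕ) (pre : List ℕ) (last : ℕ) (s : Finset ℕ) (m : ℕ) : Prop :=
  ((¬ ∃ s', ValidSub L pre last s') ∧ s = ∅ ∧ m = 0) ∨
    (ValidSub L pre last s ∧ (⋂ k ∈ s, L k).ncard = m ∧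
      ∀ s', ValidSub L pre last s' → (⋂ k ∈ s', L k).ncard ≤ m)

/-- A run of Procedure 1 (insertion sort for non-uniform generation) on the collection
`L 0, L 1, L 2, ...` (0-based indexing: `L i` is the paper's `L_{i+1}`).
`ord i` is the ordering `C'_i` (a list of original indices, a permutation of
`0, ..., i-1`), `pos i` is the (0-based) position at which language `i` is finally
inserted during iteration `i`, `wit i` is the witness subcollection `C(L_i)` (a finite
set of original indices) and `mstar i` is the non-uniform complexity `m*(L_i)`. -/
structure Proc1Run (L : ℕ → Set ℕ) where
  ord : ℕ → List ℕ
  pos : ℕ → ℕ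
  wit : ℕ → Finset ℕ
  mstar : ℕ → ℕ
  ord_zero : ord 0 = []
  pos_le : ∀ i, pos i ≤ i
  /-- `C'_{i+1}` is obtained from `C'_i` by inserting language `i` at position `pos i`. -/
  ord_succ : ∀ i, ord (i + 1) = (ord i).take (pos i) ++ i :: (ord i).drop (pos i)
  /-- While moving language `i` forward through each intermediate position `q` with
  `pos i < q ≤ i`, the while loop did not break: the value `m_chk` computed there was
  at most `m*` of the preceding language. -/
  moved : ∀ i q, pos i < q → q ≤ i →
    ∀ m, IsMchk L ((ord i).take q) i m → m ≤ mstar ((ord i).getD (q - 1) 0)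
  /-- At the final position the while loop broke: either `j ≤ 1` or `m_chk > m*` of the
  preceding language. -/
  stopped : ∀ i, pos i = 0 ∨ mstar ((ord i).getD (pos i - 1) 0) < mstar i
  /-- `C(L_i)` and `m*(L_i)` are the witness subcollection and maximal value computed at
  the final position. -/
  wit_spec : ∀ i, WitnessAt L ((ord i).take (pos i)) i (wit i) (mstar i)

/-- The input prefix `x_1, ..., x_t` presented to the algorithm at time `t`. -/
def inputList (x : ℕ → ℕ) (t : ℕ) : List ℕ := (List.range t).map x

/-- `S_t`: the set of distinct strings among the first `t` inputs. -/
def Sfin (x : ℕ → ℕ) (t : ℕ) : Finset ℕ := (inputList x t).toFinset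

/-- `x` is an enumeration of the language `Lang`: every term lies in `Lang` and every
string of `Lang` appears at some finite time. -/
def IsEnumOf (x : ℕ → ℕ) (Lang : Set ℕ) : Prop :=
  (∀ t, x t ∈ Lang) ∧ ∀ s ∈ Lang, ∃ t, x t = s

/-- The (deterministic) generating algorithm `G` non-uniformly generates from the
collection `L` with generation times `tG`: for every language `L i` and every
enumeration of it, at every time `t ≥ 1` with `|S_t| ≥ tG i` the output is a new
string of `L i`. -/
def NonUniformGen (G : List ℕ → ℕ) (L : ℕ → Set ℕ) (tG : ℕ → ℕ) : Prop :=
  ∀ i (x : ℕ → ℕ), IsEnumOf x (L i) → ∀ t, 1 ≤ t → tG i ≤ (Sfin x t).card →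
    G (inputList x t) ∈ L i \ ↑(Sfin x t)

theorem exists_isMchk (L : ℕ → Set ℕ) (pre : List ℕ) (last : ℕ) :
    ∃ m, IsMchk L pre last m := by
  by_cases h : ∃ s, ValidSub L pre last s
  · have hfin : {s | ValidSub L pre last s}.Finite := by
      refine (insert last pre.toFinset).powerset.finite_toSet.subset fun s hs =>
        Finset.mem_powerset.2 fun k hk => ?_
      rcases hs.2.1 k hk with rfl | hk
      · exact Finset.mem_insert_self _ _
      · exact Finset.mem_insert_of_mem (List.mem_toFinset.2 hk)
    obtain ⟨s, hs, hmax⟩ := Set.exists_max_image _ (fun s => (⋂ k ∈ s, L k).ncard) hfin h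
    exact ⟨_, Or.inr ⟨⟨s, hs, rfl⟩, hmax⟩⟩
  · exact ⟨0, Or.inl ⟨h, rfl⟩⟩

theorem IsMchk.ncard_le {L : ℕ → Set ℕ} {pre : List ℕ} {last m : ℕ} {s : Finset ℕ}
    (hm : IsMchk L pre last m) (hs : ValidSub L pre last s) : (⋂ k ∈ s, L k).ncard ≤ m := by
  rcases hm with ⟨hno, -⟩ | ⟨-, hmax⟩
  · exact absurd ⟨s, hs⟩ hno
  · exact hmax s hs

theorem WitnessAt.ncard_le {L : ℕ → Set ℕ} {pre : List ℕ} {last m : ℕ} {w s : Finset ℕ}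
    (hw : WitnessAt L pre last w m) (hs : ValidSub L pre last s) :
    (⋂ k ∈ s, L k).ncard ≤ m := by
  rcases hw with ⟨hno, -, -⟩ | ⟨-, -, hmax⟩
  · exact absurd ⟨s, hs⟩ hno
  · exact hmax s hs

section Generator

variable (L : ℕ → Set ℕ) (S : Finset ℕ)

open Classical in
noncomputable def consistentIndices (l : List ℕ) : Finset ℕ :=
  l.toFinset.filter fun k => ↑S ⊆ L k

noncomputable def consistentCap (l : List ℕ) : Set ℕ :=
  ⋂ k ∈ consistentIndices L S l, L k

theorem mem_consistentIndices {l : List ℕ} {k : ℕ} :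
    k ∈ consistentIndices L S l ↔ k ∈ l ∧ ↑S ⊆ L k := by
  simp [consistentIndices]

theorem mem_consistentCap {l : List ℕ} {x : ℕ} :
    x ∈ consistentCap L S l ↔ ∀ k ∈ l, ↑S ⊆ L k → x ∈ L k := by
  simp [consistentCap, mem_consistentIndices]

theorem subset_consistentCap (l : List ℕ) : ↑S ⊆ consistentCap L S l :=
  fun _ hx => (mem_consistentCap L S).2 fun _ _ hk => hk hx

theorem consistentCap_subset {l : List ℕ} {a : ℕ} (ha : a ∈ l) (hS : ↑S ⊆ L a) :
    consistentCap L S l ⊆ L a :=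
  fun _ hx => (mem_consistentCap L S).1 hx a ha hS

theorem consistentCap_anti {l l' : List ℕ} (h : l <+: l') :
    consistentCap L S l' ⊆ consistentCap L S l :=
  fun _ hx => (mem_consistentCap L S).2 fun k hk => (mem_consistentCap L S).1 hx k (h.subset hk)

open Classical in
noncomputable def infinitePrefixLength (l : List ℕ) : ℕ :=
  Nat.findGreatest (fun k => (consistentCap L S (l.take k)).Infinite) l.length

noncomputable def nextString (l : List ℕ) : ℕ :=
  sInf (consistentCap L S (l.take (infinitePrefixLength L S l)) \ S)

open Classical in
theorem nextString_mem {pre post : List ℕ} {a : ℕ} (hS : ↑S ⊆ L a)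
    (hinf : (consistentCap L S (pre ++ [a])).Infinite) :
    nextString L S (pre ++ a :: post) ∈ L a \ S := by
  set l := pre ++ a :: post
  have htake : l.take (pre.length + 1) = pre ++ [a] := by simp [l, List.take_append]
  have hlen : pre.length + 1 ≤ l.length := by simp [l]
  have hprefix : (consistentCap L S (l.take (pre.length + 1))).Infinite := htake ▸ hinf
  have hK := Nat.le_findGreatest
    (P := fun k => (consistentCap L S (l.take k)).Infinite) hlen hprefix
  have hKinf := Nat.findGreatest_spec
    (P := fun k => (consistentCap L S (l.take k)).Infinite) hlen hprefix
  have hsub : consistentCap L S (l.take (infinitePrefixLength L S l)) ⊆ L a :=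
    (consistentCap_anti L S (htake ▸ List.take_prefix_take_left hK)).trans
      (consistentCap_subset L S (by simp) hS)
  have hmem := Nat.sInf_mem (hKinf.sdiff S.finite_toSet).nonempty
  exact ⟨hsub hmem.1, hmem.2⟩

end Generator

namespace Proc1Run

variable {L : ℕ → Set ℕ} (R : Proc1Run L)

theorem ord_perm_range (n : ℕ) : (R.ord n).Perm (List.range n) := by
  induction n with
  | zero => simp [R.ord_zero]
  | succ n ih =>
    rw [R.ord_succ, List.range_succ]
    refine List.perm_middle.trans ?_
    rw [List.take_append_drop]
    exact (ih.cons n).trans (List.perm_append_singleton _ _).symm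

theorem length_ord (n : ℕ) : (R.ord n).length = n := by
  simpa using (R.ord_perm_range n).length_eq

theorem mem_ord {n k : ℕ} : k ∈ R.ord n ↔ k < n := by
  simpa using (R.ord_perm_range n).mem_iff

theorem exists_ord_succ_eq (n : ℕ) : ∃ A B, R.ord n = A ++ B ∧
    (R.ord n).take (R.pos n) = A ∧ A.length = R.pos n ∧ R.ord (n + 1) = A ++ n :: B :=
  ⟨_, _, (List.take_append_drop _ _).symm, rfl, by simp [R.length_ord, R.pos_le], R.ord_succ n⟩

theorem ncard_le_mstar_of_moved {n a : ℕ} {pre post : List ℕ}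
    (hord : R.ord n = pre ++ a :: post) (hpos : R.pos n ≤ pre.length) {s : Finset ℕ}
    (hs : ValidSub L (pre ++ [a]) n s) : (⋂ k ∈ s, L k).ncard ≤ R.mstar a := by
  have hlen : pre.length + 1 ≤ n := by
    have := R.length_ord n
    simp only [hord, List.length_append, List.length_cons] at this
    omega
  have htake : (R.ord n).take (pre.length + 1) = pre ++ [a] := by simp [hord, List.take_append]
  obtain ⟨m, hm⟩ := exists_isMchk L (pre ++ [a]) n
  have hmoved := R.moved n (pre.length + 1) (by omega) hlen m (htake ▸ hm)
  simpa [hord] using (hm.ncard_le hs).trans hmoved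

theorem ncard_biInter_le_mstar (n : ℕ) {pre post : List ℕ} {a : ℕ}
    (hord : R.ord n = pre ++ a :: post) {s : Finset ℕ} (hs : ValidSub L pre a s) :
    (⋂ k ∈ s, L k).ncard ≤ R.mstar a := by
  induction n generalizing pre post a s with
  | zero => simp [R.ord_zero] at hord
  | succ n ih =>
    obtain ⟨A, B, hAB, htake, hA, hsucc⟩ := R.exists_ord_succ_eq n
    rw [hsucc] at hord
    -- `a` lies before, at, or after the language `n` inserted into `C'_{n+1}`
    rcases List.append_eq_append_iff.1 hord with
      ⟨_ | ⟨b, mid⟩, rfl, hB⟩ | ⟨_ | ⟨b, mid⟩, rfl, hB⟩ <;>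
      simp only [List.nil_append, List.cons_append, List.cons.injEq] at hB
    · obtain ⟨rfl, -⟩ := hB
      exact htake ▸ R.wit_spec _ |>.ncard_le (by simpa using hs)
    · obtain ⟨rfl, rfl⟩ := hB
      by_cases hn : n ∈ s
      · refine R.ncard_le_mstar_of_moved (pre := A ++ mid) (post := post) (by simp [hAB])
          (by simp [hA]) ⟨hn, fun k hk => ?_, hs.2.2⟩
        have := hs.2.1 k hk
        simp only [List.mem_append, List.mem_cons] at this ⊢
        tauto
      · refine ih (pre := A ++ mid) (post := post) (by simp [hAB])
          ⟨hs.1, fun k hk => ?_, hs.2.2⟩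
        have := hs.2.1 k hk
        simp only [List.mem_append, List.mem_cons] at this ⊢
        rcases this with h | h | rfl | h <;> tauto
    · obtain ⟨rfl, -⟩ := hB
      exact htake ▸ R.wit_spec _ |>.ncard_le (by simpa using hs)
    · obtain ⟨rfl, rfl⟩ := hB
      exact ih (post := mid ++ B) (by simp [hAB]) hs

theorem consistentCap_infinite {n a : ℕ} {pre post : List ℕ}
    (hord : R.ord n = pre ++ a :: post)
    {S : Finset ℕ} (hS : ↑S ⊆ L a) (hcard : R.mstar a < S.card) :
    (consistentCap L S (pre ++ [a])).Infinite := by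
  intro hfin
  have hvalid : ValidSub L pre a (consistentIndices L S (pre ++ [a])) := by
    refine ⟨(mem_consistentIndices L S).2 ⟨by simp, hS⟩, fun k hk => ?_, hfin⟩
    simpa [or_comm] using ((mem_consistentIndices L S).1 hk).1
  have hle := R.ncard_biInter_le_mstar n hord hvalid
  have hge : S.card ≤ (consistentCap L S (pre ++ [a])).ncard :=
    Set.ncard_coe_finset S ▸ Set.ncard_le_ncard (subset_consistentCap L S _) hfin
  exact absurd (hge.trans hle) (not_le.2 hcard)

end Proc1Run

theorem coe_Sfin_subset {x : ℕ → ℕ} {Lang : Set ℕ} (hx : IsEnumOf x Lang) (t : ℕ) :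
    ↑(Sfin x t) ⊆ Lang := by
  intro s hs
  simp only [Sfin, inputList, Finset.mem_coe, List.mem_toFinset, List.mem_map] at hs
  obtain ⟨u, -, rfl⟩ := hs
  exact hx.1 u

theorem card_Sfin_le (x : ℕ → ℕ) (t : ℕ) : (Sfin x t).card ≤ t :=
  (List.toFinset_card_le _).trans (by simp [inputList])

theorem stmt_3_general (L : ℕ → Set ℕ) (R : Proc1Run L)
    (f : ℕ → ℕ) (hf : Monotone f)
    (hftop : Filter.Tendsto f Filter.atTop Filter.atTop) :
    ∃ (G : List ℕ → ℕ) (tG : ℕ → ℕ), NonUniformGen G L tG ∧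
      ∀ i, tG i ≤ max (sInf {j : ℕ | i + 1 ≤ f j}) (R.mstar i + 1) := by
  refine ⟨fun input => nextString L input.toFinset (R.ord (f input.length)),
    fun i => max (sInf {j : ℕ | i + 1 ≤ f j}) (R.mstar i + 1), ?_, fun i => le_rfl⟩
  intro i x hx t _ hcard
  rw [max_le_iff] at hcard
  have hi : i < f t := by
    have hne : {j | i + 1 ≤ f j}.Nonempty := (hftop.eventually_ge_atTop (i + 1)).exists
    exact (Nat.sInf_mem hne).trans (hf (hcard.1.trans (card_Sfin_le x t)))
  obtain ⟨pre, post, hord⟩ := List.append_of_mem (R.mem_ord.2 hi)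
  have hS := coe_Sfin_subset hx t
  have hlen : (inputList x t).length = t := by simp [inputList]
  simp only [hlen, hord]
  exact nextString_mem L _ hS (R.consistentCap_infinite hord hS hcard.2)

/-- Theorem 3.5: non-uniform generation times. For any non-decreasing
`f : ℕ → ℕ` tending to infinity, there is an algorithm non-uniformly generating from `L`
with generation times `t*(L_i) ≤ max (g i) (m*(L_i) + 1)`, where `g i` is the smallest
`j` with `f j ≥ i` (0-based: `f j ≥ i + 1`). -/
theorem stmt_3 (L : ℕ → Set ℕ) (hL : ∀ i, (L i).Infinite) (R : Proc1Run L)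
    (f : ℕ → ℕ) (hf : Monotone f)
    (hftop : Filter.Tendsto f Filter.atTop Filter.atTop) :
    ∃ (G : List ℕ → ℕ) (tG : ℕ → ℕ), NonUniformGen G L tG ∧
      ∀ i, tG i ≤ max (sInf {j : ℕ | i + 1 ≤ f j}) (R.mstar i + 1) :=
  stmt_3_general L R f hf hftop
end

section
/- For every finite collection C = (L_1, ..., L_N) of languages, there exists a generating algorithm G that non-uniformly generates from C whose sequence of generation times t_G(L_1), ..., t_G(L_N) is Pareto-optimal for C. -/
/-- Non-uniform generation from a finite collection `L : Fin N → Set ℕ` with generation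
times `tG`. -/
def NonUniformGenFin {N : ℕ} (G : List ℕ → ℕ) (L : Fin N → Set ℕ) (tG : Fin N → ℕ) :
    Prop :=
  ∀ i (x : ℕ → ℕ), IsEnumOf x (L i) → ∀ t, 1 ≤ t → tG i ≤ (Sfin x t).card →
    G (inputList x t) ∈ L i \ ↑(Sfin x t)

open Classical in
/-- Consistent languages. -/
noncomputable def Vset {N : ℕ} (L : Fin N → Set ℕ) (S : Finset ℕ) : Finset (Fin N) :=
  Finset.univ.filter (fun j => ↑S ⊆ L j)

open Classical in
noncomputable def Gdef {N : ℕ} (L : Fin N → Set ℕ) (l : List ℕ) : ℕ :=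
  if h : ((⋂ j ∈ Vset L l.toFinset, L j) \ ↑l.toFinset).Nonempty then h.choose else 0

open Classical in
noncomputable def tGdef {N : ℕ} (L : Fin N → Set ℕ) (i : Fin N) : ℕ :=
  1 + (Finset.univ.filter (fun A : Finset (Fin N) => i ∈ A)).sup
      (fun A => (⋂ j ∈ A, L j).ncard)

open Classical in
lemma Gdef_works {N : ℕ} (L : Fin N → Set ℕ) (hL : ∀ i, (L i).Infinite) :
    NonUniformGenFin (Gdef L) L (tGdef L) := by
  intro i x hx t ht hcard
  set S : Finset ℕ := Sfin x t with hS
  have hSfin : (inputList x t).toFinset = S := rfl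
  have hSsub : (↑S : Set ℕ) ⊆ L i := by
    intro s hs
    simp only [hS, Sfin, inputList, List.coe_toFinset, List.mem_map, Set.mem_setOf_eq] at hs
    obtain ⟨k, _, rfl⟩ := hs
    exact hx.1 k
  have hiV : i ∈ Vset L S := by simp [Vset, hSsub]
  have hI_sub : (⋂ j ∈ Vset L S, L j) ⊆ L i := Set.biInter_subset_of_mem hiV
  have hS_sub_I : (↑S : Set ℕ) ⊆ ⋂ j ∈ Vset L S, L j := by
    refine Set.subset_iInter₂ fun j hj => ?_
    simp only [Vset, Finset.mem_filter] at hj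
    exact hj.2
  have hInf : (⋂ j ∈ Vset L S, L j).Infinite := by
    by_contra h
    rw [Set.not_infinite] at h
    have h1 : S.card ≤ (⋂ j ∈ Vset L S, L j).ncard := by
      rw [← Set.ncard_coe_finset S]
      exact Set.ncard_le_ncard hS_sub_I h
    have h2 : (⋂ j ∈ Vset L S, L j).ncard ≤
        (Finset.univ.filter (fun A : Finset (Fin N) => i ∈ A)).sup
          (fun A => (⋂ j ∈ A, L j).ncard) :=
      by
      apply Finset.le_sup (f := fun A : Finset (Fin N) => (⋂ j ∈ A, L j).ncard)
      exact Finset.mem_filter.mpr ⟨Finset.mem_univ _, hiV⟩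
    have := hcard
    simp only [tGdef] at this
    omega
  have hne : ((⋂ j ∈ Vset L (inputList x t).toFinset, L j) \
      ↑(inputList x t).toFinset).Nonempty := by
    rw [hSfin]
    exact (hInf.diff S.finite_toSet).nonempty
  have hGx : Gdef L (inputList x t) ∈
      (⋂ j ∈ Vset L (inputList x t).toFinset, L j) \ ↑(inputList x t).toFinset := by
    rw [Gdef, dif_pos hne]
    exact hne.choose_spec
  rw [hSfin] at hGx
  exact ⟨hI_sub hGx.1, hGx.2⟩

/-- corollary of Remark 3.1 and Theorem 3.6. Every finite collection
of languages admits an algorithm whose sequence of non-uniform generation times is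
Pareto-optimal. -/
theorem stmt_6 (N : ℕ) (L : Fin N → Set ℕ) (hL : ∀ i, (L i).Infinite) :
    ∃ (G : List ℕ → ℕ) (tG : Fin N → ℕ), NonUniformGenFin G L tG ∧
      ∀ (G' : List ℕ → ℕ) (tG' : Fin N → ℕ), NonUniformGenFin G' L tG' →
        ∀ i, tG' i < tG i → ∃ j, j ≠ i ∧ tG j < tG' j := by
  set P : ℕ → Prop := fun s => ∃ (G : List ℕ → ℕ) (tG : Fin N → ℕ),
    NonUniformGenFin G L tG ∧ (∑ i, tG i) = s with hP
  have hPex : ∃ s, P s := ⟨∑ i, tGdef L i, Gdef L, tGdef L, Gdef_works L hL, rfl⟩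
  classical
  obtain ⟨G, tG, hGen, hsum⟩ := Nat.find_spec hPex
  refine ⟨G, tG, hGen, ?_⟩
  intro G' tG' hGen' i hlt
  by_contra hcon
  push_neg at hcon
  have hle : ∀ j, tG' j ≤ tG j := by
    intro j
    by_cases hj : j = i
    · subst hj; omega
    · exact hcon j hj
  have hsumlt : ∑ j, tG' j < ∑ j, tG j := by
    refine Finset.sum_lt_sum (fun j _ => hle j) ⟨i, Finset.mem_univ i, hlt⟩
  have : P (∑ j, tG' j) := ⟨G', tG', hGen', rfl⟩
  have := Nat.find_min' hPex this
  omega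
end

section
/- Let L_{e_1}, L_{e_2}, L_{e_3}, ... be an enumeration without repetition of the languages L_{e_i} = {1, 2, ..., 100} ∪ ℤ_{≥ e_i} (e_i ∈ ℤ), where ℤ_{≥ i} = {i, i+1, i+2, ...}, over the universe ℤ, and let t_1, t_2, t_3, ... be a sequence of finite integers, each at least 1. Then there exists a generating algorithm that non-uniformly generates from the collection (L_{e_1}, L_{e_2}, ...) with generation time at most t_i for every language L_{e_i} if and only if the sequence is admissible: for every t ∈ {1, 2, ..., 100}, there exists a finite n_t such that e_i ≤ n_t for every i with t_i ≤ t. -/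
/-- The input prefix `x_1, ..., x_t` presented to the algorithm at time `t`
(universe `ℤ`). -/
def inputListZ (x : ℕ → ℤ) (t : ℕ) : List ℤ := (List.range t).map x

/-- `S_t`: the set of distinct strings among the first `t` inputs. -/
def SfinZ (x : ℕ → ℤ) (t : ℕ) : Finset ℤ := (inputListZ x t).toFinset

/-- `x` is an enumeration of the language `Lang ⊆ ℤ`. -/
def IsEnumOfZ (x : ℕ → ℤ) (Lang : Set ℤ) : Prop :=
  (∀ t, x t ∈ Lang) ∧ ∀ s ∈ Lang, ∃ t, x t = s

/-- Non-uniform generation from a collection of languages over `ℤ` indexed by `ℕ`. -/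
def NonUniformGenZN (G : List ℤ → ℤ) (L : ℕ → Set ℤ) (tG : ℕ → ℕ) : Prop :=
  ∀ i (x : ℕ → ℤ), IsEnumOfZ x (L i) → ∀ t, 1 ≤ t → tG i ≤ (SfinZ x t).card →
    G (inputListZ x t) ∈ L i \ ↑(SfinZ x t)

/-- The language `{1, ..., 100} ∪ ℤ_{≥ i}`. -/
def Lang10 (i : ℤ) : Set ℤ := {z : ℤ | (1 ≤ z ∧ z ≤ 100) ∨ i ≤ z}

/-!
Necessity: feed the generator `1, 2, …, T` and then its own outputs. If `t_i ≤ T`, every finite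
prefix of this run extends to an enumeration of `L_{e_i}`, so from time `T` on each output is a
new element of `L_{e_i}`. After 101 steps the run has produced 101 distinct elements of
`L_{e_i}`, one of which lies outside `{1, …, 100}` and is therefore `≥ e_i`; the maximum of
these 101 values, which does not depend on `i`, is the bound `n_T`.

Sufficiency: with `N` the bound for `T = 100`, output one more than the maximum of `N` and all
inputs seen. This is new, and it is `≥ e_i`: either `t_i ≤ 100`, or more than 100 distinct
inputs have been seen and one of them is already `≥ e_i`.
-/

lemma mem_SfinZ {x : ℕ → ℤ} {t : ℕ} {z : ℤ} : z ∈ SfinZ x t ↔ ∃ k < t, x k = z := by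
  simp [SfinZ, inputListZ]

lemma inputListZ_succ (x : ℕ → ℤ) (t : ℕ) :
    inputListZ x (t + 1) = inputListZ x t ++ [x t] := by
  simp [inputListZ, List.range_succ]

lemma SfinZ_succ (x : ℕ → ℤ) (t : ℕ) : SfinZ x (t + 1) = insert (x t) (SfinZ x t) := by
  ext z
  simp [SfinZ, inputListZ_succ]

lemma inputListZ_congr {x y : ℕ → ℤ} {t : ℕ} (h : ∀ k < t, x k = y k) :
    inputListZ x t = inputListZ y t :=
  List.map_congr_left fun k hk => h k (List.mem_range.mp hk)

lemma SfinZ_congr {x y : ℕ → ℤ} {t : ℕ} (h : ∀ k < t, x k = y k) : SfinZ x t = SfinZ y t := by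
  rw [SfinZ, SfinZ, inputListZ_congr h]

lemma SfinZ_mono (x : ℕ → ℤ) {s t : ℕ} (hst : s ≤ t) : SfinZ x s ⊆ SfinZ x t := fun z hz => by
  obtain ⟨k, hk, rfl⟩ := mem_SfinZ.mp hz
  exact mem_SfinZ.mpr ⟨k, hk.trans_le hst, rfl⟩

lemma coe_SfinZ_subset {x : ℕ → ℤ} {t : ℕ} {L : Set ℤ} (hx : ∀ k < t, x k ∈ L) :
    ↑(SfinZ x t) ⊆ L := fun z hz => by
  obtain ⟨k, hk, rfl⟩ := mem_SfinZ.mp hz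
  exact hx k hk

lemma card_SfinZ_add_of_fresh {x : ℕ → ℤ} {T : ℕ} (hfresh : ∀ m, T ≤ m → x m ∉ SfinZ x m)
    (k : ℕ) : (SfinZ x (T + k)).card = (SfinZ x T).card + k := by
  induction k with
  | zero => rfl
  | succ k ih =>
    rw [← add_assoc, SfinZ_succ, Finset.card_insert_of_notMem (hfresh _ (by omega)), ih, add_assoc]

lemma exists_isEnumOfZ_extending {L : Set ℤ} {c : ℤ} (hc : c ∈ L) {s : ℕ → ℤ} {m : ℕ}
    (hs : ∀ k < m, s k ∈ L) : ∃ x : ℕ → ℤ, (∀ k < m, x k = s k) ∧ IsEnumOfZ x L := by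
  classical
  let fill (n : ℕ) : ℤ := if Denumerable.ofNat ℤ n ∈ L then Denumerable.ofNat ℤ n else c
  refine ⟨fun k => if k < m then s k else fill (k - m), fun k hk => if_pos hk, ?_, ?_⟩
  · intro k
    by_cases hk : k < m
    · simpa [hk] using hs k hk
    · simp only [hk, if_false, fill]
      split_ifs with h
      exacts [h, hc]
  · intro z hz
    refine ⟨m + Encodable.encode z, ?_⟩
    simp only [show ¬m + Encodable.encode z < m by omega, if_false, Nat.add_sub_cancel_left, fill,
      Denumerable.ofNat_encode, hz, if_true]

section Feedback

variable (G : List ℤ → ℤ) (a : ℕ → ℤ) (T : ℕ)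

/-- The first `k` terms of the run that presents `a 0, …, a (T - 1)` and then feeds `G` its own
outputs. -/
def feedbackList : ℕ → List ℤ
  | 0 => []
  | k + 1 => feedbackList k ++ [if k < T then a k else G (feedbackList k)]

def feedbackSeq (k : ℕ) : ℤ := if k < T then a k else G (feedbackList G a T k)

lemma feedbackList_eq_inputListZ (k : ℕ) :
    feedbackList G a T k = inputListZ (feedbackSeq G a T) k := by
  induction k with
  | zero => rfl
  | succ k ih => rw [inputListZ_succ, feedbackList, ← ih, feedbackSeq]

lemma feedbackSeq_of_lt {k : ℕ} (hk : k < T) : feedbackSeq G a T k = a k := if_pos hk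

lemma feedbackSeq_of_le {k : ℕ} (hk : T ≤ k) :
    feedbackSeq G a T k = G (inputListZ (feedbackSeq G a T) k) := by
  rw [feedbackSeq, if_neg (by omega), feedbackList_eq_inputListZ]

variable {G a T}

lemma SfinZ_feedbackSeq_self : SfinZ (feedbackSeq G a T) T = SfinZ a T :=
  SfinZ_congr fun _ => feedbackSeq_of_lt G a T

lemma feedbackSeq_mem_and_fresh {L : ℕ → Set ℤ} {tG : ℕ → ℕ} (hG : NonUniformGenZN G L tG)
    {i : ℕ} (hT : 1 ≤ T) (ha : ∀ k < T, a k ∈ L i) (hcard : tG i ≤ (SfinZ a T).card) (m : ℕ) :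
    feedbackSeq G a T m ∈ L i ∧ (T ≤ m → feedbackSeq G a T m ∉ SfinZ (feedbackSeq G a T) m) := by
  induction m using Nat.strong_induction_on with
  | _ m ih =>
    by_cases hm : m < T
    · rw [feedbackSeq_of_lt G a T hm]
      exact ⟨ha m hm, fun h => absurd h (by omega)⟩
    push Not at hm
    obtain ⟨x, hxs, hx⟩ := exists_isEnumOfZ_extending (ha 0 hT) fun k hk => (ih k hk).1
    have hcard_x : tG i ≤ (SfinZ x m).card := by
      rw [SfinZ_congr hxs]
      calc tG i ≤ (SfinZ a T).card := hcard
        _ = (SfinZ (feedbackSeq G a T) T).card := by rw [SfinZ_feedbackSeq_self]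
        _ ≤ _ := Finset.card_le_card (SfinZ_mono _ hm)
    have hout := hG i x hx m (hT.trans hm) hcard_x
    rw [inputListZ_congr hxs, SfinZ_congr hxs, ← feedbackSeq_of_le G a T hm] at hout
    exact ⟨hout.1, fun _ => hout.2⟩

end Feedback

lemma exists_le_of_subset_Lang10 {S : Finset ℤ} {n : ℤ} (hS : ↑S ⊆ Lang10 n)
    (hcard : 100 < S.card) : ∃ z ∈ S, n ≤ z := by
  by_contra! h
  have hsub : S ⊆ Finset.Icc 1 100 := fun z hz => by
    rcases hS hz with hz' | hz'
    · exact Finset.mem_Icc.mpr hz'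
    · exact absurd hz' (h z hz).not_ge
  have := Finset.card_le_card hsub
  rw [Int.card_Icc] at this
  omega

lemma card_SfinZ_natCast_add_one (k : ℕ) : (SfinZ (fun j : ℕ => (j : ℤ) + 1) k).card = k := by
  have hfresh : ∀ m, 0 ≤ m → ((m : ℤ) + 1) ∉ SfinZ (fun j : ℕ => (j : ℤ) + 1) m := by
    intro m _ hm
    obtain ⟨j, hj, hjm⟩ := mem_SfinZ.mp hm
    omega
  simpa [SfinZ, inputListZ] using card_SfinZ_add_of_fresh hfresh k

theorem exists_bound_of_nonUniformGenZN {e : ℕ → ℤ} {G : List ℤ → ℤ} {tG : ℕ → ℕ}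
    (hG : NonUniformGenZN G (fun i => Lang10 (e i)) tG) {T : ℕ} (hT1 : 1 ≤ T) (hT : T ≤ 100) :
    ∃ n : ℤ, ∀ i, tG i ≤ T → e i ≤ n := by
  set s := feedbackSeq G (fun j : ℕ => (j : ℤ) + 1) T
  obtain ⟨n, hn⟩ := (SfinZ s 101).bddAbove
  refine ⟨n, fun i hi => ?_⟩
  have hprefix : ∀ k < T, (k : ℤ) + 1 ∈ Lang10 (e i) := fun k hk => Or.inl ⟨by omega, by omega⟩
  have hrun := feedbackSeq_mem_and_fresh hG hT1 hprefix (by rwa [card_SfinZ_natCast_add_one])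
  have hcard : (SfinZ s 101).card = 101 := by
    have h := card_SfinZ_add_of_fresh (fun m hm => (hrun m).2 hm) (101 - T)
    rwa [SfinZ_feedbackSeq_self, card_SfinZ_natCast_add_one, Nat.add_sub_cancel' (by omega)] at h
  obtain ⟨z, hz, hez⟩ := exists_le_of_subset_Lang10 (S := SfinZ s 101)
    (coe_SfinZ_subset fun k _ => (hrun k).1) (by omega)
  exact hez.trans (hn hz)

def freshAbove (N : ℤ) (l : List ℤ) : ℤ :=
  (insert N l.toFinset).max' (Finset.insert_nonempty _ _) + 1

lemma lt_freshAbove (N : ℤ) (l : List ℤ) : N < freshAbove N l :=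
  Int.lt_add_one_of_le (Finset.le_max' _ _ (Finset.mem_insert_self _ _))

lemma lt_freshAbove_of_mem {N z : ℤ} {l : List ℤ} (hz : z ∈ l) : z < freshAbove N l :=
  Int.lt_add_one_of_le (Finset.le_max' _ _ (Finset.mem_insert_of_mem (List.mem_toFinset.mpr hz)))

theorem nonUniformGenZN_freshAbove {e : ℕ → ℤ} {t : ℕ → ℕ} {N : ℤ}
    (hN : ∀ i, t i ≤ 100 → e i ≤ N) : NonUniformGenZN (freshAbove N) (fun i => Lang10 (e i)) t := by
  intro i x hx m _ hcard
  refine ⟨Or.inr ?_, fun hmem => (lt_freshAbove_of_mem (List.mem_toFinset.mp hmem)).false⟩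
  by_cases hti : t i ≤ 100
  · exact (hN i hti).trans (lt_freshAbove N _).le
  · obtain ⟨z, hz, hez⟩ := exists_le_of_subset_Lang10 (S := SfinZ x m)
      (coe_SfinZ_subset fun k _ => hx.1 k) (by omega)
    exact hez.trans (lt_freshAbove_of_mem (List.mem_toFinset.mp hz)).le

theorem stmt_10_general (e : ℕ → ℤ)
    (t : ℕ → ℕ) :
    (∃ (G : List ℤ → ℤ) (tG : ℕ → ℕ),
        NonUniformGenZN G (fun i => Lang10 (e i)) tG ∧ ∀ i, tG i ≤ t i) ↔
      ∀ T : ℕ, 1 ≤ T → T ≤ 100 → ∃ n : ℤ, ∀ i, t i ≤ T → e i ≤ n := by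
  constructor
  · rintro ⟨G, tG, hG, hle⟩ T hT1 hT
    obtain ⟨n, hn⟩ := exists_bound_of_nonUniformGenZN hG hT1 hT
    exact ⟨n, fun i hi => hn i ((hle i).trans hi)⟩
  · intro h
    obtain ⟨N, hN⟩ := h 100 (by norm_num) le_rfl
    exact ⟨_, t, nonUniformGenZN_freshAbove hN, fun _ => le_rfl⟩

/-- from the proof of Proposition 3.8. Let `L_{e_1}, L_{e_2}, ...`
be an enumeration without repetition of the languages `{1,...,100} ∪ ℤ_{≥ e_i}`
(`e : ℕ → ℤ` bijective), and `t_1, t_2, ...` candidate generation times, each at least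
`1`. There exists an algorithm non-uniformly generating from the collection with
generation time at most `t_i` for every `L_{e_i}` iff the sequence is admissible:
for every `T ∈ {1, ..., 100}` there is a finite `n_T` with `e_i ≤ n_T` whenever
`t_i ≤ T`. -/
theorem stmt_10 (e : ℕ → ℤ) (he : Function.Bijective e)
    (t : ℕ → ℕ) (ht : ∀ i, 1 ≤ t i) :
    (∃ (G : List ℤ → ℤ) (tG : ℕ → ℕ),
        NonUniformGenZN G (fun i => Lang10 (e i)) tG ∧ ∀ i, tG i ≤ t i) ↔
      ∀ T : ℕ, 1 ≤ T → T ≤ 100 → ∃ n : ℤ, ∀ i, t i ≤ T → e i ≤ n :=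
  stmt_10_general e t
end
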